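/- Let M be a matroid and let N be a matroid whose ground set is the set of circuits of M. Then the following are equivalent: (i) for all circuits C₁, C₂ of M with |C₁ ∪ C₂| − r_M(C₁ ∪ C₂) = 2, every circuit C of M with C ⊆ C₁ ∪ C₂ satisfies C ∈ cl_N({C₁, C₂}); (ii) for every perfect collection 𝒞' of circuits of M, every circuit C of M with C ⊆ ∪𝒞' satisfies C ∈ cl_N(𝒞'). -/

import Mathlib

open Set Matroid
open scoped Matroid

namespace PaperLift

variable {α : Type} {β : Type}

/-- A circuit of a matroid: a minimal dependent set. -/
def Circuit (M : Matroid α) (C : Set α) : Prop :=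
  M.Dep C ∧ ∀ D, D ⊂ C → M.Indep D

/-- The rank of a set in a matroid: the supremum of cardinalities of independent subsets. -/
noncomputable def rk (M : Matroid α) (X : Set α) : ℕ :=
  sSup {n | ∃ I, M.Indep I ∧ I ⊆ X ∧ I.ncard = n}

/-- The rank of a matroid. -/
noncomputable def rank (M : Matroid α) : ℕ := rk M M.E

/-- Deletion of a set from a matroid. -/
def delete (M : Matroid α) (D : Set α) : Matroid α := M ↾ (M.E \ D)

/-- Contraction of a set in a matroid, defined by duality. -/
noncomputable def contract (M : Matroid α) (C : Set α) : Matroid α := ((M✶) ↾ (M.E \ C))✶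

/-- A hyperplane: a maximal proper flat. -/
def Hyperplane (M : Matroid α) (H : Set α) : Prop :=
  M.IsFlat H ∧ H ≠ M.E ∧ ∀ F, M.IsFlat F → H ⊂ F → F = M.E

/-- A circuit-hyperplane: a circuit that is also a hyperplane. -/
def CircuitHyperplane (M : Matroid α) (C : Set α) : Prop :=
  Circuit M C ∧ Hyperplane M C

/-- `L` is a lift of `M`: there is a matroid `K` on a ground set `E ∪ F`, with `F` disjoint
from `E = M.E`, such that `M = K / F` and `L = K \ F` (up to the canonical embedding). -/
def IsLiftOf (L M : Matroid α) : Prop :=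
  L.E = M.E ∧ ∃ (β : Type) (K : Matroid (α ⊕ β)) (F : Set (α ⊕ β)),
    Disjoint (Sum.inl '' M.E) F ∧ K.E = Sum.inl '' M.E ∪ F ∧
    contract K F = M.map Sum.inl Sum.inl_injective.injOn ∧
    delete K F = L.map Sum.inl Sum.inl_injective.injOn

/-- `N`, a matroid whose ground set is the set of circuits of `M`, satisfies the lift
condition for `M`. -/
def LiftCondition (M : Matroid α) (N : Matroid (Set α)) : Prop :=
  N.E = {C | Circuit M C} ∧
  ∀ C₁ C₂, Circuit M C₁ → Circuit M C₂ →
    (C₁ ∪ C₂).ncard = rk M (C₁ ∪ C₂) + 2 →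
    ∀ C, Circuit M C → C ⊆ C₁ ∪ C₂ → C ∈ N.closure {C₁, C₂}

/-- `L` has the rank function of the lift `M^N` of `M` constructed from `N`. -/
def IsLiftMatroid (M : Matroid α) (N : Matroid (Set α)) (L : Matroid α) : Prop :=
  L.E = M.E ∧ ∀ X ⊆ M.E, rk L X = rk M X + rk N {C | Circuit M C ∧ C ⊆ X}

/-- Matroid isomorphism: a bijection between ground sets preserving independence
in both directions. -/
def Iso (M : Matroid α) (N : Matroid β) : Prop :=
  ∃ e : α → β, InjOn e M.E ∧ e '' M.E = N.E ∧ ∀ I ⊆ M.E, (M.Indep I ↔ N.Indep (e '' I))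

/-- Representability of a matroid over a field `F`. -/
def Representable (M : Matroid α) (F : Type) [Field F] : Prop :=
  ∃ (W : Type) (_ : AddCommGroup W) (_ : Module F W) (φ : α → W),
    ∀ I ⊆ M.E, (M.Indep I ↔ InjOn φ I ∧ LinearIndependent F (fun e : I => φ e))

/-- A rank-`r` matroid is sparse paving if every `r`-element subset of the ground set is
either a base or a circuit-hyperplane. -/
def SparsePaving (M : Matroid α) : Prop :=
  ∀ S ⊆ M.E, S.ncard = rank M → (M.IsBase S ∨ CircuitHyperplane M S)

/-- A perfect collection of circuits. -/
def Perfect (M : Matroid α) (Cs : Set (Set α)) : Prop :=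
  Cs.Finite ∧ (∀ C ∈ Cs, Circuit M C) ∧
  (⋃₀ Cs).ncard = rk M (⋃₀ Cs) + Cs.ncard ∧
  ∀ C ∈ Cs, ¬ C ⊆ ⋃₀ (Cs \ {C})

/-- A linear class of circuits. -/
def LinearClass (M : Matroid α) (𝒞 : Set (Set α)) : Prop :=
  (∀ C ∈ 𝒞, Circuit M C) ∧
  ∀ C₁ ∈ 𝒞, ∀ C₂ ∈ 𝒞, (C₁ ∪ C₂).ncard = rk M (C₁ ∪ C₂) + 2 →
    ∀ C, Circuit M C → C ⊆ C₁ ∪ C₂ → C ∈ 𝒞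

/-- The circulant sets `C_i ⊆ [2t]` from the construction of `K(r,t)`. -/
def Ci (r t i : ℕ) : Set ℕ :=
  (fun k => (k + 2 * (i - 1) - 1) % (2 * t) + 1) '' (Set.Icc 1 (r - 2))

/-- The family `𝒞'(r,t)`. -/
def CC' (r t : ℕ) : Set (Set ℕ) :=
  (fun i => Ci r t i ∪ {2 * t + 1, 2 * t + 2}) '' (Set.Icc 1 t)

/-- The family `𝒞''(r,t)`. -/
def CC'' (r t : ℕ) : Set (Set ℕ) :=
  (fun i => Ci r t i ∪ Ci r t (i + 1)) '' (Set.Icc 1 (t - 1))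

/-- `K` is the matroid `K(r,t)`: a rank-`r` matroid on `[2t+2]` in which every `r`-element
subset is a base or a circuit-hyperplane, whose circuit-hyperplanes are exactly the members
of `𝒞'(r,t) ∪ 𝒞''(r,t)`. -/
def IsKrt (r t : ℕ) (K : Matroid ℕ) : Prop :=
  K.E = Set.Icc 1 (2 * t + 2) ∧ rank K = r ∧
  (∀ S ⊆ K.E, S.ncard = r → (K.IsBase S ∨ CircuitHyperplane K S)) ∧
  (∀ S, CircuitHyperplane K S ↔ S ∈ CC' r t ∪ CC'' r t)

/-- A group partition: a partition of the non-identity elements such that each part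
together with the identity is a subgroup. -/
def GroupPartition (Γ : Type) [Group Γ] (𝒜 : Set (Set Γ)) : Prop :=
  (∀ A ∈ 𝒜, A.Nonempty) ∧ (⋃₀ 𝒜 = {(1 : Γ)}ᶜ) ∧
  (∀ A ∈ 𝒜, ∀ B ∈ 𝒜, A ≠ B → Disjoint A B) ∧
  (∀ A ∈ 𝒜, ∃ H : Subgroup Γ, (H : Set Γ) = insert 1 A)

/-!
A modular pair `{C₁, C₂}` is itself a perfect collection, which gives (ii) ⇒ (i).

For (i) ⇒ (ii), let `F = ⋃ 𝒞'`. Deleting from each member of `𝒞'` an element that lies in no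
other member leaves a set `B` spanning `F` with `|B| = |F| - |𝒞'| = r(F)`, so `B` is a basis of
`F` whose fundamental circuits are exactly the members of `𝒞'`. A circuit `C ⊆ F` is a
fundamental circuit of another basis `B'` of `F`. Exchange `B'` towards `B` one element at a
time: when `B'' = B' - x + y`, a fundamental circuit `D ⊆ B' + g` of `B'` lies in `B'' + x + g`,
a set of nullity at most two. Unless `D` is already fundamental for `B''`, the fundamental
circuits of `x` and `g` with respect to `B''` are distinct, so their union has nullity two and
must contain `D`; by (i), `D` is in the `N`-closure of that modular pair.
-/

lemma circuit_iff_isCircuit {M : Matroid α} {C : Set α} : Circuit M C ↔ M.IsCircuit C :=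
  isCircuit_iff_forall_ssubset.symm

section Rank

variable {M : Matroid α} {X Y C I : Set α}

lemma cast_rk_eq_eRk (M : Matroid α) [M.RankFinite] (X : Set α) : (rk M X : ℕ∞) = M.eRk X := by
  obtain ⟨I, hI⟩ := M.exists_isBasis' X
  have hIfin : I.Finite := hI.indep.finite
  suffices rk M X = I.ncard by rw [this, hIfin.cast_ncard_eq, hI.encard_eq_eRk]
  refine IsGreatest.csSup_eq ⟨⟨I, hI.indep, hI.subset, rfl⟩, ?_⟩
  rintro n ⟨J, hJ, hJX, rfl⟩
  have hle : J.encard ≤ I.encard := hI.encard_eq_eRk ▸ hJ.encard_le_eRk_of_subset hJX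
  rwa [← hJ.finite.cast_ncard_eq, ← hIfin.cast_ncard_eq, Nat.cast_le] at hle

lemma rk_eq_ncard_of_indep [M.RankFinite] (hI : M.Indep I) : rk M I = I.ncard := by
  rw [← Nat.cast_inj (R := ℕ∞), cast_rk_eq_eRk, hI.eRk_eq_encard, hI.finite.cast_ncard_eq]

lemma rk_mono [M.RankFinite] (hXY : X ⊆ Y) : rk M X ≤ rk M Y := by
  rw [← Nat.cast_le (α := ℕ∞), cast_rk_eq_eRk, cast_rk_eq_eRk]
  exact M.eRk_mono hXY

lemma rk_union_add_rk_inter_le [M.RankFinite] (X Y : Set α) :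
    rk M (X ∪ Y) + rk M (X ∩ Y) ≤ rk M X + rk M Y := by
  rw [← Nat.cast_le (α := ℕ∞), add_comm]
  push_cast
  simp only [cast_rk_eq_eRk]
  exact M.eRk_inter_add_eRk_union_le X Y

lemma rk_le_ncard [M.Finite] (hX : X ⊆ M.E) : rk M X ≤ X.ncard := by
  rw [← Nat.cast_le (α := ℕ∞), cast_rk_eq_eRk, (M.set_finite X hX).cast_ncard_eq]
  exact M.eRk_le_encard X

lemma ncard_eq_rk_add_one_of_isCircuit [M.Finite] (hC : M.IsCircuit C) :
    C.ncard = rk M C + 1 := by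
  rw [← Nat.cast_inj (R := ℕ∞), (M.set_finite C hC.subset_ground).cast_ncard_eq, Nat.cast_add,
    cast_rk_eq_eRk, Nat.cast_one, hC.eRk_add_one_eq]

end Rank

/-- The truncated subtraction is harmless: `rk M X ≤ X.ncard` for `X ⊆ M.E` (`rk_le_ncard`). -/
noncomputable def nullity (M : Matroid α) (X : Set α) : ℕ := X.ncard - rk M X

section Nullity

variable {M : Matroid α} [M.Finite] {X Y C I : Set α}

lemma ncard_eq_rk_add_nullity (hX : X ⊆ M.E) : X.ncard = rk M X + nullity M X := by
  have := rk_le_ncard hX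
  rw [nullity]
  omega

lemma nullity_eq_zero_of_indep (hI : M.Indep I) : nullity M I = 0 := by
  rw [nullity, rk_eq_ncard_of_indep hI, Nat.sub_self]

lemma nullity_eq_one_of_isCircuit (hC : M.IsCircuit C) : nullity M C = 1 := by
  rw [nullity, ncard_eq_rk_add_one_of_isCircuit hC, Nat.add_sub_cancel_left]

lemma nullity_mono (hXY : X ⊆ Y) (hY : Y ⊆ M.E) : nullity M X ≤ nullity M Y := by
  have hsub := rk_union_add_rk_inter_le (M := M) X (Y \ X)
  rw [union_sdiff_cancel hXY, inter_sdiff_self] at hsub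
  have := rk_le_ncard (sdiff_subset.trans hY : Y \ X ⊆ M.E)
  have := ncard_sdiff_add_ncard_of_subset hXY (M.set_finite Y hY)
  have := ncard_eq_rk_add_nullity (hXY.trans hY)
  have := ncard_eq_rk_add_nullity hY
  omega

lemma nullity_insert_le (hX : X ⊆ M.E) (e : α) : nullity M (insert e X) ≤ nullity M X + 1 := by
  have := rk_mono (M := M) (subset_insert e X)
  have := ncard_insert_le e X
  have := ncard_eq_rk_add_nullity hX
  unfold nullity
  omega

lemma nullity_insert_insert_le_two (hI : M.Indep I) {g : α} (hg : g ∈ M.E) (x : α) :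
    nullity M (insert x (insert g I)) ≤ 2 := by
  have := nullity_insert_le (insert_subset hg hI.subset_ground) x
  have := nullity_insert_le hI.subset_ground g
  have := nullity_eq_zero_of_indep hI
  omega

lemma nullity_lt_nullity_union_of_isCircuit (hC : M.IsCircuit C) (hX : X ⊆ M.E)
    (hCX : ¬ C ⊆ X) : nullity M X < nullity M (X ∪ C) := by
  have hXC : M.Indep (X ∩ C) :=
    hC.ssubset_indep (inter_subset_right.ssubset_of_ne fun h ↦ hCX (h ▸ inter_subset_left))
  have := rk_union_add_rk_inter_le (M := M) X C
  have := rk_eq_ncard_of_indep hXC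
  have := ncard_eq_rk_add_one_of_isCircuit hC
  have := ncard_union_add_ncard_inter X C (M.set_finite X hX) (M.set_finite C hC.subset_ground)
  have := ncard_eq_rk_add_nullity hX
  have := ncard_eq_rk_add_nullity (union_subset hX hC.subset_ground)
  omega

end Nullity

lemma two_le_nullity_union_of_isCircuit {M : Matroid α} [M.Finite] {P Q : Set α}
    (hP : M.IsCircuit P) (hQ : M.IsCircuit Q) (hQP : ¬ Q ⊆ P) : 2 ≤ nullity M (P ∪ Q) := by
  have := nullity_lt_nullity_union_of_isCircuit hQ hP.subset_ground hQP
  rw [nullity_eq_one_of_isCircuit hP] at this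
  omega

lemma subset_of_nullity_le_nullity {M : Matroid α} [M.Finite] {D Y W : Set α}
    (hD : M.IsCircuit D) (hDW : D ⊆ W) (hYW : Y ⊆ W) (hWE : W ⊆ M.E)
    (hnull : nullity M W ≤ nullity M Y) : D ⊆ Y := by
  by_contra hDY
  have := nullity_lt_nullity_union_of_isCircuit hD (hYW.trans hWE) hDY
  have := nullity_mono (union_subset hYW hDW) hWE
  omega

/-- For a basis `B` of `X`, these are the fundamental circuits `M.fundCircuit e B`, `e ∈ X \ B`. -/
def fundCircuits (M : Matroid α) (X B : Set α) : Set (Set α) :=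
  {C | M.IsCircuit C ∧ ∃ e ∈ X, C ⊆ insert e B}

lemma exists_isBasis_mem_fundCircuits {M : Matroid α} {X C : Set α} (hC : M.IsCircuit C)
    (hCX : C ⊆ X) (hX : X ⊆ M.E) : ∃ B, M.IsBasis B X ∧ C ∈ fundCircuits M X B := by
  obtain ⟨e, he⟩ := hC.nonempty
  obtain ⟨B, hB, hCB⟩ :=
    (hC.sdiff_singleton_indep he).subset_isBasis_of_subset (sdiff_subset.trans hCX) hX
  exact ⟨B, hB, hC, e, hCX he, sdiff_singleton_subset_iff.1 hCB⟩

lemma Perfect.exists_isBasis_fundCircuits_subset [Nonempty α] {M : Matroid α} [M.Finite]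
    {Cs : Set (Set α)} (hCs : Perfect M Cs) :
    ∃ B, M.IsBasis B (⋃₀ Cs) ∧ fundCircuits M (⋃₀ Cs) B ⊆ Cs := by
  obtain ⟨-, hcirc, hcard, hpriv⟩ := hCs
  replace hcirc : ∀ C ∈ Cs, M.IsCircuit C := fun C hC ↦ circuit_iff_isCircuit.1 (hcirc C hC)
  have hpriv' : ∀ C ∈ Cs, ∃ a ∈ C, a ∉ ⋃₀ (Cs \ {C}) := fun C hC ↦ not_subset.1 (hpriv C hC)
  choose! f hfC hfpriv using hpriv'
  have hf_unique : ∀ C ∈ Cs, ∀ D ∈ Cs, f C ∈ D → D = C := fun C hC D hD hfD ↦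
    by_contra fun hne ↦ hfpriv C hC ⟨D, ⟨hD, hne⟩, hfD⟩
  have hFE : ⋃₀ Cs ⊆ M.E := sUnion_subset fun C hC ↦ (hcirc C hC).subset_ground
  have hΦF : f '' Cs ⊆ ⋃₀ Cs := image_subset_iff.2 fun C hC ↦ ⟨C, hC, hfC C hC⟩
  set B := ⋃₀ Cs \ f '' Cs
  have hCB : ∀ C ∈ Cs, C ⊆ insert (f C) B := by
    refine fun C hC a haC ↦ or_iff_not_imp_left.2 fun hne ↦ ⟨⟨C, hC, haC⟩, ?_⟩
    rintro ⟨D, hD, rfl⟩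
    exact hne (by rw [hf_unique D hD C hC haC])
  have hinj : InjOn f Cs := fun C hC D hD h ↦ hf_unique D hD C hC (h ▸ hfC C hC)
  have hBcard : B.ncard = rk M (⋃₀ Cs) := by
    rw [ncard_sdiff hΦF (M.set_finite _ (hΦF.trans hFE)), hinj.ncard_image]
    omega
  have hB : M.IsBasis B (⋃₀ Cs) := by
    refine (M.isRkFinite_set _).isBasis_of_subset_closure_of_subset_of_encard_le
      (sUnion_subset fun C hC ↦ ?_) sdiff_subset ?_
    · exact ((hcirc C hC).subset_closure_sdiff_singleton (f C)).trans
        (M.closure_subset_closure (sdiff_singleton_subset_iff.2 (hCB C hC)))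
    · rw [← (M.set_finite B (sdiff_subset.trans hFE)).cast_ncard_eq, hBcard, cast_rk_eq_eRk]
  refine ⟨B, hB, ?_⟩
  rintro D ⟨hD, g, hgF, hDg⟩
  obtain ⟨C, hC, rfl⟩ : g ∈ f '' Cs := by
    by_contra hg
    exact hD.not_indep (hB.indep.subset (hDg.trans (insert_subset ⟨hgF, hg⟩ subset_rfl)))
  rwa [hD.eq_fundCircuit_of_subset hB.indep hDg,
    ← (hcirc C hC).eq_fundCircuit_of_subset hB.indep (hCB C hC)]

lemma perfect_pair {M : Matroid α} [M.Finite] {C₁ C₂ : Set α} (hC₁ : Circuit M C₁)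
    (hC₂ : Circuit M C₂) (hmod : (C₁ ∪ C₂).ncard = rk M (C₁ ∪ C₂) + 2) :
    Perfect M {C₁, C₂} := by
  rw [circuit_iff_isCircuit] at hC₁ hC₂
  have hne : C₁ ≠ C₂ := by
    rintro rfl
    rw [union_self, ncard_eq_rk_add_one_of_isCircuit hC₁] at hmod
    omega
  refine ⟨toFinite _, ?_, by rwa [sUnion_pair, ncard_pair hne], ?_⟩
  · rintro C (rfl | rfl) <;> rwa [circuit_iff_isCircuit]
  · rintro C (rfl | rfl)
    · rw [pair_sdiff_left hne, sUnion_singleton]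
      exact fun h ↦ hne (hC₁.eq_of_subset_isCircuit hC₂ h)
    · rw [pair_sdiff_right hne, sUnion_singleton]
      exact fun h ↦ hne (hC₂.eq_of_subset_isCircuit hC₁ h).symm

namespace LiftCondition

lemma fundCircuits_subset_ground {M : Matroid α} {N : Matroid (Set α)} {X B : Set α}
    (hN : LiftCondition M N) : fundCircuits M X B ⊆ N.E :=
  fun _ hC ↦ hN.1 ▸ circuit_iff_isCircuit.2 hC.1

variable {M : Matroid α} [M.Finite] {N : Matroid (Set α)} {X B B' D : Set α}

lemma mem_closure_fundCircuits (hN : LiftCondition M N) (hB : M.IsBasis B X)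
    {x g : α} (hx : x ∈ X) (hg : g ∈ X) (hD : M.IsCircuit D) (hDs : D ⊆ insert x (insert g B)) :
    D ∈ N.closure (fundCircuits M X B) := by
  by_cases hDx : D ⊆ insert x B
  · exact N.subset_closure _ hN.fundCircuits_subset_ground ⟨hD, x, hx, hDx⟩
  by_cases hDg : D ⊆ insert g B
  · exact N.subset_closure _ hN.fundCircuits_subset_ground ⟨hD, g, hg, hDg⟩
  have hgxB : g ∉ insert x B := fun h ↦
    hDx <| hDs.trans <| insert_subset (mem_insert x B) (insert_subset h (subset_insert x B))
  have hxgB : x ∉ insert g B := fun h ↦ hDg <| hDs.trans <| insert_subset h subset_rfl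
  set P := M.fundCircuit x B
  set Q := M.fundCircuit g B
  set W := insert x (insert g B)
  have hP : M.IsCircuit P := hB.indep.fundCircuit_isCircuit
    (hB.subset_closure hx) fun h ↦ hxgB (mem_insert_of_mem _ h)
  have hQ : M.IsCircuit Q := hB.indep.fundCircuit_isCircuit
    (hB.subset_closure hg) fun h ↦ hgxB (mem_insert_of_mem _ h)
  have hPQW : P ∪ Q ⊆ W := union_subset
    ((M.fundCircuit_subset_insert x B).trans (insert_subset_insert (subset_insert g B)))
    ((M.fundCircuit_subset_insert g B).trans (subset_insert x _))
  have hWE : W ⊆ M.E := insert_subset (hB.subset_ground hx)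
    (insert_subset (hB.subset_ground hg) hB.indep.subset_ground)
  have hW : nullity M W ≤ 2 :=
    nullity_insert_insert_le_two hB.indep (hB.subset_ground hg) x
  have hPQ : nullity M (P ∪ Q) = 2 := by
    have := two_le_nullity_union_of_isCircuit hP hQ fun h ↦
      hgxB (M.fundCircuit_subset_insert x B (h (M.mem_fundCircuit g B)))
    have := nullity_mono hPQW hWE
    omega
  have hmod : (P ∪ Q).ncard = rk M (P ∪ Q) + 2 :=
    hPQ ▸ ncard_eq_rk_add_nullity (hPQW.trans hWE)
  have hDPQ : D ⊆ P ∪ Q := subset_of_nullity_le_nullity hD hDs hPQW hWE (hPQ ▸ hW)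
  refine N.closure_subset_closure (pair_subset ?_ ?_) (hN.2 P Q (circuit_iff_isCircuit.2 hP)
    (circuit_iff_isCircuit.2 hQ) hmod D (circuit_iff_isCircuit.2 hD) hDPQ)
  · exact ⟨hP, x, hx, M.fundCircuit_subset_insert x B⟩
  · exact ⟨hQ, g, hg, M.fundCircuit_subset_insert g B⟩

lemma fundCircuits_subset_closure_fundCircuits (hN : LiftCondition M N) (hB : M.IsBasis B X)
    (hB' : M.IsBasis B' X) : fundCircuits M X B' ⊆ N.closure (fundCircuits M X B) := by
  obtain ⟨n, hn⟩ : ∃ n, (B' \ B).ncard = n := ⟨_, rfl⟩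
  induction n generalizing B' with
  | zero =>
    have hB'B : B' ⊆ B := sdiff_eq_empty.1 <|
      (ncard_eq_zero (M.set_finite _ (sdiff_subset.trans hB'.indep.subset_ground))).1 hn
    rw [hB'.eq_of_subset_indep hB.indep hB'B hB.subset]
    exact N.subset_closure _ hN.fundCircuits_subset_ground
  | succ n ih =>
    obtain ⟨x, hx⟩ := nonempty_of_ncard_ne_zero (s := B' \ B) (by omega)
    obtain ⟨y, hy, hB''⟩ := hB'.exchange hB hx
    have hB''B : insert y (B' \ {x}) \ B = (B' \ B) \ {x} := by
      rw [insert_sdiff_of_mem _ hy.1, sdiff_right_comm]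
    have ih' := ih hB'' (by rw [hB''B, ncard_sdiff_singleton_of_mem hx, hn, Nat.add_sub_cancel])
    refine fun D ⟨hD, g, hg, hDg⟩ ↦ N.closure_subset_closure_of_subset_closure ih' ?_
    refine hN.mem_closure_fundCircuits hB'' (hB'.subset hx.1) hg hD (hDg.trans ?_)
    rw [insert_comm]
    exact insert_subset_insert (sdiff_singleton_subset_iff.1 (subset_insert y _))

lemma mem_closure_of_perfect (hN : LiftCondition M N) {Cs : Set (Set α)} (hCs : Perfect M Cs)
    {C : Set α} (hC : M.IsCircuit C) (hCs' : C ⊆ ⋃₀ Cs) : C ∈ N.closure Cs := by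
  have : Nonempty α := ⟨hC.nonempty.some⟩
  obtain ⟨B, hB, hfund⟩ := hCs.exists_isBasis_fundCircuits_subset
  obtain ⟨B', hB', hCB'⟩ := exists_isBasis_mem_fundCircuits hC hCs' hB.subset_ground
  exact N.closure_subset_closure hfund (hN.fundCircuits_subset_closure_fundCircuits hB hB' hCB')

end LiftCondition

/-- The modular-pair condition `(*')` and the perfect-collection condition `(*)` are
equivalent. -/
theorem stmt5 {α : Type} (M : Matroid α) (hM : M.E.Finite) (N : Matroid (Set α))
    (hNE : N.E = {C | Circuit M C}) :
    (∀ C₁ C₂, Circuit M C₁ → Circuit M C₂ → (C₁ ∪ C₂).ncard = rk M (C₁ ∪ C₂) + 2 →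
        ∀ C, Circuit M C → C ⊆ C₁ ∪ C₂ → C ∈ N.closure {C₁, C₂}) ↔
      (∀ Cs, Perfect M Cs → ∀ C, Circuit M C → C ⊆ ⋃₀ Cs → C ∈ N.closure Cs) := by
  have : M.Finite := ⟨hM⟩
  refine ⟨fun hpair Cs hCs C hC hCs' ↦ ?_, fun hperf C₁ C₂ hC₁ hC₂ hmod C hC hC' ↦ ?_⟩
  · exact LiftCondition.mem_closure_of_perfect ⟨hNE, hpair⟩ hCs (circuit_iff_isCircuit.1 hC) hCs'
  · exact hperf _ (perfect_pair hC₁ hC₂ hmod) C hC (by rwa [sUnion_pair])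

end PaperLift
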